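/- arXiv:2605.14183 — 2 statements merged into one kernel-verified Lean document; each statement's English description precedes it below -/
import Mathlib

section
/- Let α ∈ ℤ, k ∈ ℝ³ with third component β = k₃, and n ∈ ℂ³. For ψ ∈ ℝ let R_ψ denote the rotation about the axis e₃ = (0,0,1) by angle ψ, i.e. the matrix with rows (cos ψ, −sin ψ, 0), (sin ψ, cos ψ, 0), (0,0,1), acting ℂ-linearly on ℂ³. Define the twisted X-ray field E₀ : ℝ³ → ℂ³ by E₀(x) = (1/2π) ∫_{−π}^{π} e^{iαψ} (R_ψ n) e^{i (R_ψ k)·x} dψ. Then E₀ is an eigenfunction of the helical group action: for every θ ∈ ℝ, τ ∈ ℝ and x ∈ ℝ³, R_θ E₀(R_{−θ} x − τ e₃) = e^{−i(αθ + βτ)} E₀(x). -/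
open Real

/-- Rotation about the axis `e₃ = (0,0,1)` by angle `ψ`. -/
noncomputable def Rot (ψ : ℝ) : Matrix (Fin 3) (Fin 3) ℝ :=
  !![Real.cos ψ, -Real.sin ψ, 0;
     Real.sin ψ,  Real.cos ψ, 0;
     0, 0, 1]

/-- The same rotation acting ℂ-linearly on ℂ³. -/
noncomputable def RotC (ψ : ℝ) : Matrix (Fin 3) (Fin 3) ℂ :=
  (Rot ψ).map (fun t => (t : ℂ))

/-!
Under the helical motion the integrand at angle `ψ` becomes a fixed phase times the integrand at
`ψ + θ`: `R_θ R_ψ = R_{ψ+θ}`, the rotations are orthogonal and fix `e₃`, so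
`R_ψ k · (R_{−θ} x − τ e₃) = R_{ψ+θ} k · x − τ k₃`, and `e^{iαψ} = e^{−iαθ} e^{iα(ψ+θ)}`.
Since `α` is an integer the integrand is `2π`-periodic, so shifting the variable by `θ` leaves
the integral over `[−π, π]` unchanged.
-/

open Matrix

namespace Function.Periodic

variable {E : Type*} [NormedAddCommGroup E] [NormedSpace ℝ E]

theorem intervalIntegral_comp_add_right {f : ℝ → E} {a b : ℝ} (hf : Periodic f (b - a)) (d : ℝ) :
    ∫ x in a..b, f (x + d) = ∫ x in a..b, f x := by
  have h := hf.intervalIntegral_add_eq (a + d) a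
  rw [add_sub_cancel, show a + d + (b - a) = b + d by ring] at h
  rw [intervalIntegral.integral_comp_add_right, h]

end Function.Periodic

theorem Matrix.mulVec_intervalIntegral {𝕜 m n : Type*} [RCLike 𝕜] [Fintype m] [Fintype n]
    (A : Matrix m n 𝕜) {f : ℝ → n → 𝕜} {a b : ℝ}
    (hf : IntervalIntegrable f MeasureTheory.volume a b) :
    A *ᵥ ∫ x in a..b, f x = ∫ x in a..b, A *ᵥ f x :=
  ((mulVecLin A).toContinuousLinearMap.intervalIntegral_comp_comm hf).symm

theorem Rot_mul_Rot (a b : ℝ) : Rot a * Rot b = Rot (a + b) := by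
  ext i j
  fin_cases i <;> fin_cases j <;>
    simp [Rot, mul_apply, Fin.sum_univ_three, Real.cos_add, Real.sin_add] <;> ring

theorem RotC_mul_RotC (a b : ℝ) : RotC a * RotC b = RotC (a + b) := by
  change (Rot a).map Complex.ofRealHom * (Rot b).map Complex.ofRealHom
    = (Rot (a + b)).map Complex.ofRealHom
  rw [← Matrix.map_mul, Rot_mul_Rot]

theorem transpose_Rot (a : ℝ) : (Rot a)ᵀ = Rot (-a) := by
  ext i j
  fin_cases i <;> fin_cases j <;> simp [Rot]

theorem Rot_add_two_pi (a : ℝ) : Rot (a + 2 * π) = Rot a := by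
  simp [Rot]

theorem Rot_mulVec_apply_two (a : ℝ) (v : Fin 3 → ℝ) : (Rot a *ᵥ v) 2 = v 2 := by
  simp [Rot, mulVec, dotProduct, Fin.sum_univ_three]

@[fun_prop]
theorem continuous_Rot : Continuous Rot := by
  unfold Rot
  fun_prop

@[fun_prop]
theorem continuous_RotC : Continuous RotC :=
  continuous_Rot.matrix_map Complex.continuous_ofReal

theorem Rot_mulVec_dotProduct_helical (ψ θ τ : ℝ) (k x : Fin 3 → ℝ) :
    (Rot ψ *ᵥ k) ⬝ᵥ (Rot (-θ) *ᵥ x - τ • ![0, 0, 1]) = (Rot (ψ + θ) *ᵥ k) ⬝ᵥ x - τ * k 2 := by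
  have hrot : (Rot ψ *ᵥ k) ⬝ᵥ (Rot (-θ) *ᵥ x) = (Rot (ψ + θ) *ᵥ k) ⬝ᵥ x := by
    rw [dotProduct_mulVec, ← transpose_Rot, vecMul_transpose, mulVec_mulVec, Rot_mul_Rot,
      add_comm]
  have haxis : (Rot ψ *ᵥ k) ⬝ᵥ ![0, 0, 1] = k 2 := by
    simp [dotProduct, Fin.sum_univ_three, Rot_mulVec_apply_two]
  rw [dotProduct_sub, dotProduct_smul, hrot, haxis, smul_eq_mul]

noncomputable def xrayIntegrand (α : ℤ) (k : Fin 3 → ℝ) (n : Fin 3 → ℂ) (x : Fin 3 → ℝ)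
    (ψ : ℝ) : Fin 3 → ℂ :=
  (Complex.exp (Complex.I * α * ψ) * Complex.exp (Complex.I * ((Rot ψ *ᵥ k) ⬝ᵥ x : ℝ))) •
    RotC ψ *ᵥ n

theorem continuous_xrayIntegrand (α : ℤ) (k : Fin 3 → ℝ) (n : Fin 3 → ℂ) (x : Fin 3 → ℝ) :
    Continuous (xrayIntegrand α k n x) := by
  unfold xrayIntegrand
  fun_prop

theorem xrayIntegrand_periodic (α : ℤ) (k : Fin 3 → ℝ) (n : Fin 3 → ℂ) (x : Fin 3 → ℝ) :
    Function.Periodic (xrayIntegrand α k n x) (2 * π) := by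
  intro ψ
  have hphase : Complex.exp (Complex.I * α * ((ψ + 2 * π : ℝ) : ℂ))
      = Complex.exp (Complex.I * α * ψ) := by
    rw [Complex.ofReal_add, mul_add, Complex.exp_add,
      show Complex.I * α * ((2 * π : ℝ) : ℂ) = α * (2 * π * Complex.I) by push_cast; ring,
      Complex.exp_int_mul_two_pi_mul_I, mul_one]
  simp only [xrayIntegrand, RotC, Rot_add_two_pi, hphase]

theorem RotC_mulVec_xrayIntegrand_helical (α : ℤ) (k : Fin 3 → ℝ) (n : Fin 3 → ℂ)
    (θ τ : ℝ) (x : Fin 3 → ℝ) (ψ : ℝ) :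
    RotC θ *ᵥ xrayIntegrand α k n (Rot (-θ) *ᵥ x - τ • ![0, 0, 1]) ψ
      = Complex.exp (-(Complex.I * ((α : ℂ) * (θ : ℂ) + (k 2 : ℂ) * (τ : ℂ)))) •
        xrayIntegrand α k n x (ψ + θ) := by
  simp only [xrayIntegrand, mulVec_smul, mulVec_mulVec, RotC_mul_RotC,
    Rot_mulVec_dotProduct_helical, smul_smul, add_comm θ ψ]
  congr 1
  simp only [← Complex.exp_add]
  congr 1
  push_cast
  ring

/-- The twisted X-ray field
`E₀(x) = (1/2π) ∫_{−π}^{π} e^{iαψ} (R_ψ n) e^{i(R_ψ k)·x} dψ` is an eigenfunction of the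
helical group action: `R_θ E₀(R_{−θ}x − τe₃) = e^{−i(αθ+βτ)} E₀(x)` with `β = k₃`. -/
theorem twisted_xray_helical_eigenfunction
    (α : ℤ) (k : Fin 3 → ℝ) (n : Fin 3 → ℂ)
    (E₀ : (Fin 3 → ℝ) → Fin 3 → ℂ)
    (hE₀ : ∀ x, E₀ x = ((2 * π)⁻¹ : ℝ) •
      ∫ ψ in (-π)..π,
        (Complex.exp (Complex.I * (α : ℂ) * (ψ : ℂ)) *
         Complex.exp (Complex.I * ((∑ i : Fin 3, (Rot ψ).mulVec k i * x i : ℝ) : ℂ))) •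
        (RotC ψ).mulVec n) :
    ∀ (θ τ : ℝ) (x : Fin 3 → ℝ),
      (RotC θ).mulVec (E₀ ((Rot (-θ)).mulVec x - τ • ![0, 0, 1]))
        = Complex.exp (-(Complex.I * ((α : ℂ) * (θ : ℂ) + (k 2 : ℂ) * (τ : ℂ)))) • E₀ x := by
  intro θ τ x
  have hE : ∀ z, E₀ z = ((2 * π)⁻¹ : ℝ) • ∫ ψ in (-π)..π, xrayIntegrand α k n z ψ := hE₀
  have hper : Function.Periodic (xrayIntegrand α k n x) (π - -π) := by
    rw [sub_neg_eq_add, ← two_mul]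
    exact xrayIntegrand_periodic α k n x
  rw [hE, hE, mulVec_smul, mulVec_intervalIntegral _
      ((continuous_xrayIntegrand α k n _).intervalIntegrable _ _),
    intervalIntegral.integral_congr fun ψ _ => RotC_mulVec_xrayIntegrand_helical α k n θ τ x ψ,
    intervalIntegral.integral_smul, hper.intervalIntegral_comp_add_right, smul_comm]
end

section
/- Let n ≥ 1, let v₁,…,vₙ be nonzero vectors in ℂ², and let α ∈ ℂⁿ be an optimal coefficient vector with v_opt = Σⱼ αⱼ vⱼ. Then for every j = 1,…,n, the Hermitian inner product ⟨v_opt, vⱼ⟩ is nonzero. -/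
/-- Hermitian inner product on ℂ²: `⟨u,w⟩ = Σᵢ uᵢ conj(wᵢ)`. -/
noncomputable def herm (u w : Fin 2 → ℂ) : ℂ :=
  ∑ i : Fin 2, u i * (starRingEnd ℂ) (w i)

/-- Hermitian norm on ℂ²: `|u| = √⟨u,u⟩`. -/
noncomputable def cnorm2 (u : Fin 2 → ℂ) : ℝ :=
  Real.sqrt (∑ i : Fin 2, Complex.normSq (u i))

/-- A coefficient vector is admissible if every entry has modulus at most 1. -/
def Admissible {n : ℕ} (α : Fin n → ℂ) : Prop :=
  ∀ j, ‖α j‖ ≤ 1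

/-- A coefficient vector is optimal if it is admissible and maximizes the norm of the
resultant `Σⱼ αⱼ vⱼ` among all admissible coefficient vectors. -/
def IsOptimal {n : ℕ} (v : Fin n → Fin 2 → ℂ) (α : Fin n → ℂ) : Prop :=
  Admissible α ∧ ∀ β : Fin n → ℂ, Admissible β →
    cnorm2 (∑ j, β j • v j) ≤ cnorm2 (∑ j, α j • v j)

/-!
If `⟨v_opt, v_j⟩ = 0`, replace `α_j` by `α_j + t` with `t ≠ 0` and `|α_j + t| ≤ 1` (take `t = -α_j`,
or `t = 1` when `α_j = 0`). The new coefficients are admissible and the resultant becomes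
`v_opt + t v_j`, whose norm exceeds `|v_opt|` by Pythagoras since `t v_j ⊥ v_opt`; this
contradicts optimality. The argument works in any inner product space over `ℝ` or `ℂ`; `herm`
and `cnorm2` are the inner product and norm of `EuclideanSpace ℂ (Fin 2)`.
-/

open scoped InnerProductSpace

section

variable {𝕜 E ι : Type*} [RCLike 𝕜] [NormedAddCommGroup E] [InnerProductSpace 𝕜 E]

theorem norm_lt_norm_add_smul_of_inner_eq_zero {x y : E} (h : ⟪y, x⟫_𝕜 = 0) (hy : y ≠ 0)
    {t : 𝕜} (ht : t ≠ 0) : ‖x‖ < ‖x + t • y‖ := by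
  have hxy : ⟪x, t • y⟫_𝕜 = 0 := by rw [inner_smul_right, inner_eq_zero_symm.mp h, mul_zero]
  have hpyth := norm_add_sq_eq_norm_sq_add_norm_sq_of_inner_eq_zero x (t • y) hxy
  have hty : 0 < ‖t • y‖ := norm_pos_iff.mpr (smul_ne_zero ht hy)
  nlinarith [norm_nonneg x, norm_nonneg (x + t • y)]

theorem exists_ne_zero_norm_add_le_one (z : 𝕜) :
    ∃ t : 𝕜, t ≠ 0 ∧ ‖z + t‖ ≤ 1 := by
  by_cases h0 : z = 0
  · exact ⟨1, one_ne_zero, by simp [h0]⟩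
  · exact ⟨-z, neg_ne_zero.mpr h0, by simp⟩

theorem sum_add_single_smul [Fintype ι] [DecidableEq ι] (α : ι → 𝕜) (v : ι → E) (j : ι) (t : 𝕜) :
    ∑ i, (α + Pi.single j t : ι → 𝕜) i • v i = ∑ i, α i • v i + t • v j := by
  simp [add_smul, Finset.sum_add_distrib, Pi.single_apply, ite_smul]

theorem inner_sum_smul_ne_zero_of_forall_norm_le [Fintype ι] {v : ι → E} {α : ι → 𝕜}
    (hα : ∀ i, ‖α i‖ ≤ 1)
    (hmax : ∀ β : ι → 𝕜, (∀ i, ‖β i‖ ≤ 1) → ‖∑ i, β i • v i‖ ≤ ‖∑ i, α i • v i‖)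
    {j : ι} (hj : v j ≠ 0) : ⟪v j, ∑ i, α i • v i⟫_𝕜 ≠ 0 := by
  classical
  intro h
  obtain ⟨t, ht, htj⟩ := exists_ne_zero_norm_add_le_one (α j)
  have hβ : ∀ i, ‖(α + Pi.single j t : ι → 𝕜) i‖ ≤ 1 := by
    intro i
    rcases eq_or_ne i j with rfl | hi
    · simpa using htj
    · simpa [hi] using hα i
  have := hmax _ hβ
  rw [sum_add_single_smul] at this
  exact (norm_lt_norm_add_smul_of_inner_eq_zero h hj ht).not_ge this

end

theorem herm_eq_inner (u w : Fin 2 → ℂ) :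
    herm u w = ⟪WithLp.toLp 2 w, WithLp.toLp 2 u⟫_ℂ := by
  simp [herm, PiLp.inner_apply]

theorem cnorm2_eq_norm (u : Fin 2 → ℂ) : cnorm2 u = ‖WithLp.toLp 2 u‖ := by
  simp [cnorm2, EuclideanSpace.norm_eq, Complex.normSq_eq_norm_sq]

theorem optimal_inner_products_nonzero_general
    (n : ℕ) (v : Fin n → Fin 2 → ℂ) (hv : ∀ j, v j ≠ 0)
    (α : Fin n → ℂ) (hα : IsOptimal v α) :
    ∀ j, herm (∑ i, α i • v i) (v j) ≠ 0 := by
  intro j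
  have hmax : ∀ β : Fin n → ℂ, (∀ i, ‖β i‖ ≤ 1) →
      ‖∑ i, β i • WithLp.toLp 2 (v i)‖ ≤ ‖∑ i, α i • WithLp.toLp 2 (v i)‖ := by
    intro β hβ
    simpa [cnorm2_eq_norm, WithLp.toLp_sum] using hα.2 β hβ
  rw [herm_eq_inner, WithLp.toLp_sum]
  simp only [WithLp.toLp_smul]
  exact inner_sum_smul_ne_zero_of_forall_norm_le hα.1 hmax (by simpa using hv j)

/-- For an optimal coefficient vector `α` with resultant
`v_opt = Σⱼ αⱼ vⱼ`, the inner product `⟨v_opt, vⱼ⟩` is nonzero for every `j`. -/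
theorem optimal_inner_products_nonzero
    (n : ℕ) (hn : 1 ≤ n) (v : Fin n → Fin 2 → ℂ) (hv : ∀ j, v j ≠ 0)
    (α : Fin n → ℂ) (hα : IsOptimal v α) :
    ∀ j, herm (∑ i, α i • v i) (v j) ≠ 0 :=
  optimal_inner_products_nonzero_general n v hv α hα
end
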